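/- (Correctness of the sequential at-most-one encoding, constraint (7)) Let n ≥ 2 and x_1, …, x_n be Boolean values. Then at most one of x_1, …, x_n is true if and only if there exist Boolean values p_1, …, p_{n−1} such that all of the following clauses hold: (¬x_1 ∨ p_1), (¬x_n ∨ ¬p_{n−1}), and for every i with 1 < i < n: (¬x_i ∨ p_i), (¬p_{i−1} ∨ p_i), and (¬x_i ∨ ¬p_{i−1}). -/

import Mathlib

/-! The register `p i` of the encoding is meant to hold `x_1 ∨ … ∨ x_i`.
The clauses force `x_a → p_k` for all `a ≤ k`, so a second true `x_b` with `b > a` clashes with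
`p_{b-1}`; conversely, if at most one `x_i` is true, the prefix disjunction satisfies every
clause. -/

theorem Finset.card_filter_le_one_iff_of_lt {α : Type*} [LinearOrder α] {s : Finset α}
    {P : α → Prop} [DecidablePred P] :
    (s.filter P).card ≤ 1 ↔ ∀ a ∈ s, ∀ b ∈ s, a < b → P a → ¬P b := by
  simp only [Finset.card_le_one, Finset.mem_filter]
  constructor
  · rintro h a ha b hb hab hPa hPb
    exact hab.ne (h a ⟨ha, hPa⟩ b ⟨hb, hPb⟩)
  · rintro h a ⟨ha, hPa⟩ b ⟨hb, hPb⟩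
    by_contra hne
    rcases lt_or_gt_of_ne hne with hab | hba
    · exact h a ha b hb hab hPa hPb
    · exact h b hb a ha hba hPb hPa

theorem card_filter_Icc_le_one_iff {n : ℕ} {x : ℕ → Bool} :
    ((Finset.Icc 1 n).filter (fun i => x i = true)).card ≤ 1 ↔
      ∀ a b, 1 ≤ a → a < b → b ≤ n → x a = true → x b = false := by
  simp only [Finset.card_filter_le_one_iff_of_lt, Finset.mem_Icc, Bool.not_eq_true]
  exact ⟨fun h a b ha hab hb => h a ⟨ha, hab.le.trans hb⟩ b ⟨ha.trans hab.le, hb⟩ hab,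
    fun h a ha b hb hab => h a b ha.1 hab hb.2⟩

theorem Bool.eq_false_or_iff_imp {a : Bool} {q : Prop} : a = false ∨ q ↔ (a = true → q) := by
  cases a <;> simp

def SequentialClauses (n : ℕ) (x p : ℕ → Bool) : Prop :=
  (x 1 = false ∨ p 1 = true) ∧
  (x n = false ∨ p (n - 1) = false) ∧
  (∀ i : ℕ, 1 < i → i < n →
    (x i = false ∨ p i = true) ∧
    (p (i - 1) = false ∨ p i = true) ∧
    (x i = false ∨ p (i - 1) = false))

namespace SequentialClauses

variable {n : ℕ} {x p : ℕ → Bool}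

theorem register_of_le (h : SequentialClauses n x p) {a k : ℕ} (ha : 1 ≤ a) (hak : a ≤ k)
    (hk : k < n) (hxa : x a = true) : p k = true := by
  obtain ⟨hfirst, -, hmid⟩ := h
  induction k, hak using Nat.le_induction with
  | base =>
    rcases ha.eq_or_lt with rfl | ha
    · simpa [hxa] using hfirst
    · simpa [hxa] using (hmid a ha hk).1
  | succ k hak ih =>
    simpa [ih (by omega)] using (hmid (k + 1) (by omega) hk).2.1

theorem eq_false_of_lt (h : SequentialClauses n x p) {a b : ℕ} (ha : 1 ≤ a) (hab : a < b)
    (hb : b ≤ n) (hxa : x a = true) : x b = false := by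
  have hp : p (b - 1) = true := h.register_of_le ha (by omega) (by omega) hxa
  rcases hb.eq_or_lt with rfl | hb
  · simpa [hp] using h.2.1
  · simpa [hp] using (h.2.2 b (by omega) hb).2.2

end SequentialClauses

def prefixOr (x : ℕ → Bool) (i : ℕ) : Bool :=
  (List.range' 1 i).any x

section prefixOr

variable {x : ℕ → Bool}

theorem prefixOr_eq_true {i : ℕ} : prefixOr x i = true ↔ ∃ j, 1 ≤ j ∧ j ≤ i ∧ x j = true := by
  simp only [prefixOr, List.any_eq_true, List.mem_range'_1, Nat.lt_one_add_iff, and_assoc]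

theorem prefixOr_of_le {i j : ℕ} (hj : 1 ≤ j) (hji : j ≤ i) (hx : x j = true) :
    prefixOr x i = true :=
  prefixOr_eq_true.2 ⟨j, hj, hji, hx⟩

theorem prefixOr_eq_false {i : ℕ} (h : ∀ j, 1 ≤ j → j ≤ i → x j = false) :
    prefixOr x i = false := by
  rw [← Bool.not_eq_true, prefixOr_eq_true]
  rintro ⟨j, hj, hji, hx⟩
  simp [h j hj hji] at hx

variable {n : ℕ}

theorem prefixOr_sub_one_eq_false
    (h : ∀ a b, 1 ≤ a → a < b → b ≤ n → x a = true → x b = false) {m : ℕ} (hm : m ≤ n)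
    (hxm : x m = true) :
    prefixOr x (m - 1) = false :=
  prefixOr_eq_false fun j hj hjm =>
    Bool.eq_false_iff.2 fun hxj => by simp [h j m hj (by omega) hm hxj] at hxm

theorem sequentialClauses_prefixOr
    (h : ∀ a b, 1 ≤ a → a < b → b ≤ n → x a = true → x b = false) :
    SequentialClauses n x (prefixOr x) := by
  refine ⟨Bool.eq_false_or_iff_imp.2 (prefixOr_of_le le_rfl le_rfl),
    Bool.eq_false_or_iff_imp.2 (prefixOr_sub_one_eq_false h le_rfl),
    fun i hi hin => ⟨Bool.eq_false_or_iff_imp.2 (prefixOr_of_le hi.le le_rfl),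
      Bool.eq_false_or_iff_imp.2 fun hp => ?_,
      Bool.eq_false_or_iff_imp.2 (prefixOr_sub_one_eq_false h hin.le)⟩⟩
  obtain ⟨j, hj, hji, hxj⟩ := prefixOr_eq_true.1 hp
  exact prefixOr_of_le hj (by omega) hxj

end prefixOr

theorem sequential_at_most_one_general (n : ℕ) (x : ℕ → Bool) :
    ((Finset.Icc 1 n).filter (fun i => x i = true)).card ≤ 1 ↔
    ∃ p : ℕ → Bool,
      (x 1 = false ∨ p 1 = true) ∧
      (x n = false ∨ p (n - 1) = false) ∧
      (∀ i : ℕ, 1 < i → i < n →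
        (x i = false ∨ p i = true) ∧
        (p (i - 1) = false ∨ p i = true) ∧
        (x i = false ∨ p (i - 1) = false)) := by
  rw [card_filter_Icc_le_one_iff]
  exact ⟨fun h => ⟨prefixOr x, sequentialClauses_prefixOr h⟩,
    fun ⟨p, hp⟩ a b => SequentialClauses.eq_false_of_lt hp⟩

/-- Correctness of the sequential at-most-one encoding (constraint (7)):
for `n ≥ 2` and Boolean values `x_1, …, x_n`, at most one of the `x_i`
(`i ∈ {1, …, n}`) is true iff there exist Boolean values `p_1, …, p_{n-1}`
satisfying the clauses `(¬x_1 ∨ p_1)`, `(¬x_n ∨ ¬p_{n-1})`, and for every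
`1 < i < n`: `(¬x_i ∨ p_i)`, `(¬p_{i-1} ∨ p_i)` and `(¬x_i ∨ ¬p_{i-1})`. -/
theorem sequential_at_most_one (n : ℕ) (hn : 2 ≤ n) (x : ℕ → Bool) :
    ((Finset.Icc 1 n).filter (fun i => x i = true)).card ≤ 1 ↔
    ∃ p : ℕ → Bool,
      (x 1 = false ∨ p 1 = true) ∧
      (x n = false ∨ p (n - 1) = false) ∧
      (∀ i : ℕ, 1 < i → i < n →
        (x i = false ∨ p i = true) ∧
        (p (i - 1) = false ∨ p i = true) ∧
        (x i = false ∨ p (i - 1) = false)) :=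
  sequential_at_most_one_general n x
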